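/- If S is a Poisson random variable with mean c > 0, then E[(c^2/(1+S)^2 - 1)^2] → 0 as c → ∞. -/

import Mathlib

/-! Multiplying the Poisson weight `e^{-c} c^k / k!` by `c^m / ((k+1)⋯(k+m))` gives the weight of
`k + m`, so these ratios have mean `P(S ≥ m) ≤ 1`. Expanding the square and using
`(k+1)⁻⁴ ≤ 1/((k+1)⋯(k+4)) + 115/((k+1)⋯(k+5))` and `(k+1)⁻² ≥ 1/((k+1)(k+2))` gives
`E[(c²/(1+S)² - 1)²] ≤ P(S ≥ 4) + (115/c) P(S ≥ 5) - 2 P(S ≥ 2) + 1`,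
which is at most `115/c + 2e^{-c}(1+c)`. -/

open Filter MeasureTheory ProbabilityTheory Real Finset
open scoped NNReal Nat

lemma hasSum_poisson_mul_pow_div_ascFactorial (r : ℝ≥0) (m : ℕ) :
    HasSum (fun n : ℕ => exp (-r) * r ^ n / n ! * ((r : ℝ) ^ m / (n + 1).ascFactorial m))
      (1 - ∑ j ∈ range m, exp (-r) * r ^ j / j !) := by
  refine ((hasSum_nat_add_iff' m).2 (hasSum_one_poissonMeasure r)).congr_fun fun n => ?_
  have h : ((n + m)! : ℝ) = n ! * (n + 1).ascFactorial m := by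
    exact_mod_cast (Nat.factorial_mul_ascFactorial n m).symm
  have : ((n + 1).ascFactorial m : ℝ) ≠ 0 := by positivity
  rw [h, pow_add]
  field_simp

lemma integrable_pow_div_ascFactorial_poissonMeasure (r : ℝ≥0) (m : ℕ) :
    Integrable (fun n : ℕ => (r : ℝ) ^ m / (n + 1).ascFactorial m) Po(r) :=
  integrable_poissonMeasure_iff.2 <| (hasSum_poisson_mul_pow_div_ascFactorial r m).summable.congr
    fun n => by rw [Real.norm_of_nonneg (by positivity)]

lemma integral_pow_div_ascFactorial_poissonMeasure (r : ℝ≥0) (m : ℕ) :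
    ∫ n, (r : ℝ) ^ m / (n + 1).ascFactorial m ∂Po(r)
      = 1 - ∑ j ∈ range m, exp (-r) * r ^ j / j ! := by
  simp_rw [integral_poissonMeasure, smul_eq_mul]
  exact (hasSum_poisson_mul_pow_div_ascFactorial r m).tsum_eq

lemma integral_pow_div_ascFactorial_poissonMeasure_le_one (r : ℝ≥0) (m : ℕ) :
    ∫ n, (r : ℝ) ^ m / (n + 1).ascFactorial m ∂Po(r) ≤ 1 := by
  rw [integral_pow_div_ascFactorial_poissonMeasure, sub_le_self_iff]
  exact sum_nonneg fun j _ => by positivity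

-- Over a common denominator this says `(x+2)(x+3)(x+4)(x+5) ≤ (x+1)³(x+120)`; the difference is
-- `109x³ + 292x² + 207x`, so `115` is the least constant that works at `x = 0`.
lemma one_div_add_one_pow_four_le {x : ℝ} (hx : 0 ≤ x) :
    1 / (x + 1) ^ 4 ≤ 1 / ((x + 1) * (x + 2) * (x + 3) * (x + 4))
      + 115 / ((x + 1) * (x + 2) * (x + 3) * (x + 4) * (x + 5)) := by
  rw [div_add_div _ _ (by positivity) (by positivity),
    div_le_div_iff₀ (by positivity) (by positivity)]
  have : 0 ≤ (x + 1) ^ 2 * (x + 2) * (x + 3) * (x + 4)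
      * (109 * x ^ 3 + 292 * x ^ 2 + 207 * x) := by
    positivity
  linear_combination this

lemma sq_div_one_add_sq_sub_one_sq_le (r : ℝ) (k : ℕ) :
    (r ^ 2 / (1 + k) ^ 2 - 1) ^ 2 ≤ r ^ 4 / (k + 1).ascFactorial 4
      + 115 / r * (r ^ 5 / (k + 1).ascFactorial 5) - 2 * (r ^ 2 / (k + 1).ascFactorial 2) + 1 := by
  have hk : (0 : ℝ) ≤ k := k.cast_nonneg
  have hA2 : ((k + 1).ascFactorial 2 : ℝ) = (k + 1) * (k + 2) := by
    push_cast [Nat.ascFactorial_succ, Nat.ascFactorial_zero]; ring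
  have hA4 : ((k + 1).ascFactorial 4 : ℝ) = (k + 1) * (k + 2) * (k + 3) * (k + 4) := by
    push_cast [Nat.ascFactorial_succ, Nat.ascFactorial_zero]; ring
  have hA5 : ((k + 1).ascFactorial 5 : ℝ) = (k + 1) * (k + 2) * (k + 3) * (k + 4) * (k + 5) := by
    push_cast [Nat.ascFactorial_succ, Nat.ascFactorial_zero]; ring
  have h5 : 115 / r * (r ^ 5 / (k + 1).ascFactorial 5)
      = r ^ 4 * (115 / (k + 1).ascFactorial 5) := by
    rcases eq_or_ne r 0 with rfl | hr
    · simp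
    · field_simp
  have hsq : (r ^ 2 / (1 + k) ^ 2) ^ 2 = r ^ 4 * (1 / (k + 1) ^ 4) := by
    rw [add_comm (1 : ℝ)]; field_simp
  have hquartic :=
    mul_le_mul_of_nonneg_left (one_div_add_one_pow_four_le hk) (by positivity : 0 ≤ r ^ 4)
  have hquadratic : r ^ 2 / ((k + 1) * (k + 2)) ≤ r ^ 2 / (1 + k) ^ 2 := by
    gcongr
    nlinarith
  rw [h5, hA2, hA4, hA5]
  linear_combination hquartic + 2 * hquadratic + hsq

lemma integral_sq_div_one_add_sq_sub_one_sq_poissonMeasure_le (r : ℝ≥0) :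
    ∫ k, ((r : ℝ) ^ 2 / (1 + k) ^ 2 - 1) ^ 2 ∂Po(r) ≤ 115 / r + 2 * exp (-r) * (1 + r) := by
  have h2 := integrable_pow_div_ascFactorial_poissonMeasure r 2
  have h4 := integrable_pow_div_ascFactorial_poissonMeasure r 4
  have h5 := integrable_pow_div_ascFactorial_poissonMeasure r 5
  have hM2 : ∫ n, (r : ℝ) ^ 2 / (n + 1).ascFactorial 2 ∂Po(r) = 1 - exp (-r) * (1 + r) := by
    simp [integral_pow_div_ascFactorial_poissonMeasure, sum_range_succ]
    ring
  have hM4 := integral_pow_div_ascFactorial_poissonMeasure_le_one r 4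
  have hM5 := mul_le_of_le_one_right (by positivity : (0 : ℝ) ≤ 115 / r)
    (integral_pow_div_ascFactorial_poissonMeasure_le_one r 5)
  calc ∫ k, ((r : ℝ) ^ 2 / (1 + k) ^ 2 - 1) ^ 2 ∂Po(r)
      ≤ ∫ k, ((r : ℝ) ^ 4 / (k + 1).ascFactorial 4
          + 115 / r * ((r : ℝ) ^ 5 / (k + 1).ascFactorial 5)
          - 2 * ((r : ℝ) ^ 2 / (k + 1).ascFactorial 2) + 1) ∂Po(r) :=
        integral_mono_of_nonneg (ae_of_all _ fun _ => sq_nonneg _) (by fun_prop)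
          (ae_of_all _ fun k => sq_div_one_add_sq_sub_one_sq_le r k)
    _ = (∫ k, (r : ℝ) ^ 4 / (k + 1).ascFactorial 4 ∂Po(r))
          + 115 / r * (∫ k, (r : ℝ) ^ 5 / (k + 1).ascFactorial 5 ∂Po(r))
          - 2 * (∫ k, (r : ℝ) ^ 2 / (k + 1).ascFactorial 2 ∂Po(r)) + 1 := by
        rw [integral_add (by fun_prop) (by fun_prop), integral_sub (by fun_prop) (by fun_prop),
          integral_add (by fun_prop) (by fun_prop), integral_const_mul, integral_const_mul]
        simp
    _ ≤ 115 / r + 2 * exp (-r) * (1 + r) := by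
        linarith

lemma tendsto_div_add_exp_neg_mul_atTop (a b : ℝ) :
    Tendsto (fun x : ℝ => a / x + b * exp (-x) * (1 + x)) atTop (nhds 0) := by
  have hmul : Tendsto (fun x : ℝ => x * exp (-x)) atTop (nhds 0) := by
    simpa using tendsto_pow_mul_exp_neg_atTop_nhds_zero 1
  have := ((tendsto_const_nhds (x := a)).div_atTop tendsto_id).add
    ((tendsto_exp_neg_atTop_nhds_zero.add hmul).const_mul b)
  rw [add_zero, mul_zero, add_zero] at this
  exact this.congr fun x => by simp only [id]; ring

theorem poisson_expectation_sq2_tendsto_zero :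
    Tendsto (fun c : NNReal =>
        ∫ k : ℕ, ((c : ℝ) ^ 2 / (1 + (k : ℝ)) ^ 2 - 1) ^ 2 ∂(poissonMeasure c))
      atTop (nhds 0) :=
  tendsto_of_tendsto_of_tendsto_of_le_of_le tendsto_const_nhds
    ((tendsto_div_add_exp_neg_mul_atTop 115 2).comp (NNReal.tendsto_coe_atTop.2 tendsto_id))
    (fun _ => integral_nonneg fun _ => sq_nonneg _)
    integral_sq_div_one_add_sq_sub_one_sq_poissonMeasure_le
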